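/- Let ρ be a quantum state on a d-dimensional Hilbert space with Hamiltonian H having orthonormal eigenbasis {|E_j⟩}, and let N = {N_i}_{i=1}^n be any energy-incoherent POVM, i.e. N_i = Σ_j q(i|j) |E_j⟩⟨E_j| for a column-stochastic matrix q, with every N_i nonzero. Then the observational ergotropy is bounded above by the incoherent ergotropy: R(ρ, N) ≤ R_incoherent(ρ). -/

import Mathlib

open Matrix ComplexOrder

/-- Passive energy of a state `σ` w.r.t. the Hamiltonian `H`:
the infimum over all unitaries `U` of `Tr (H U σ U†)`. -/
noncomputable def Epass {d : ℕ} (H σ : Matrix (Fin d) (Fin d) ℂ) : ℝ :=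
  ⨅ U : Matrix.unitaryGroup (Fin d) ℂ,
    ((H * ((U : Matrix (Fin d) (Fin d) ℂ) * σ * ((U : Matrix (Fin d) (Fin d) ℂ))ᴴ)).trace).re

/-- Coarse-grained state `ρ_cg^M = ∑ i, Tr(ρ M i) • M i / Tr(M i)`. -/
noncomputable def cgState {d n : ℕ} (ρ : Matrix (Fin d) (Fin d) ℂ)
    (M : Fin n → Matrix (Fin d) (Fin d) ℂ) : Matrix (Fin d) (Fin d) ℂ :=
  ∑ i, (((ρ * M i).trace) / ((M i).trace)) • M i

/-- Observational ergotropy `R(ρ, M) = Tr(H ρ) - Epass(ρ_cg^M)`. -/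
noncomputable def obsErg {d n : ℕ} (ρ H : Matrix (Fin d) (Fin d) ℂ)
    (M : Fin n → Matrix (Fin d) (Fin d) ℂ) : ℝ :=
  ((H * ρ).trace).re - Epass H (cgState ρ M)

/-- A fine-grained measurement: a family of rank-one mutually orthogonal
(Hermitian) projectors summing to the identity. -/
def FineGrained {d : ℕ} (P : Fin d → Matrix (Fin d) (Fin d) ℂ) : Prop :=
  (∀ i, (P i).IsHermitian) ∧ (∀ i j, P i * P j = if i = j then P i else 0) ∧
    (∑ i, P i = 1) ∧ (∀ i, (P i).rank = 1)

/-- A column-stochastic matrix: nonnegative entries, every column sums to 1. -/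
def ColStochastic {n d : ℕ} (D : Matrix (Fin n) (Fin d) ℝ) : Prop :=
  (∀ i j, 0 ≤ D i j) ∧ ∀ j, ∑ i, D i j = 1

/-- A doubly stochastic matrix: nonnegative entries, all row and column sums are 1. -/
def DoublyStochastic {d : ℕ} (B : Matrix (Fin d) (Fin d) ℝ) : Prop :=
  (∀ i j, 0 ≤ B i j) ∧ (∀ i, ∑ j, B i j = 1) ∧ (∀ j, ∑ i, B i j = 1)

/-- The entries of `x` rearranged in non-increasing order. -/
noncomputable def descSort {d : ℕ} (x : Fin d → ℝ) : Fin d → ℝ :=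
  fun i => x (Tuple.sort x i.rev)

/-- `Majorized x y` (`x ≺ y`): for every `k` the sum of the `k` largest entries
of `x` is at most that of `y`, with equal total sums. -/
def Majorized {d : ℕ} (x y : Fin d → ℝ) : Prop :=
  (∀ k : ℕ, (∑ i : Fin d, if (i : ℕ) < k then descSort x i else 0) ≤
      ∑ i : Fin d, if (i : ℕ) < k then descSort y i else 0) ∧
    (∑ i, x i = ∑ i, y i)

/-- The rank-one projector `|v⟩⟨v|`. -/
noncomputable def projVec {d : ℕ} (v : Fin d → ℂ) : Matrix (Fin d) (Fin d) ℂ :=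
  Matrix.vecMulVec v (star v)

/-- `v` is an orthonormal family: `⟨v i, v j⟩ = δ_{ij}`. -/
def IsONB {d : ℕ} (v : Fin d → (Fin d → ℂ)) : Prop :=
  ∀ i j, star (v i) ⬝ᵥ v j = if i = j then 1 else 0

/-- The dephasing `Δ_ρ = ∑ j ⟨E_j|ρ|E_j⟩ |E_j⟩⟨E_j|` of `ρ` in the basis `v`. -/
noncomputable def dephase {d : ℕ} (ρ : Matrix (Fin d) (Fin d) ℂ)
    (v : Fin d → (Fin d → ℂ)) : Matrix (Fin d) (Fin d) ℂ :=
  ∑ j, (star (v j) ⬝ᵥ (ρ *ᵥ v j)) • projVec (v j)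

/-- Incoherent ergotropy `R_incoherent(ρ) = Tr(H Δ_ρ) - Epass(Δ_ρ)`. -/
noncomputable def Rincoherent {d : ℕ} (ρ H : Matrix (Fin d) (Fin d) ℂ)
    (v : Fin d → (Fin d → ℂ)) : ℝ :=
  ((H * dephase ρ v).trace).re - Epass H (dephase ρ v)

/-!
In the eigenbasis of `H` everything is diagonal. The energies of `ρ` and of its dephasing `Δ_ρ`
agree, and the coarse-grained state is diagonal with populations `B p`, where `p` are the
populations of `Δ_ρ` and `B j k = ∑ i, q(i|j) q(i|k) / ∑ l, q(i|l)` is doubly stochastic. By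
Birkhoff's theorem `ρ_cg` is then a convex mixture of the states obtained from `Δ_ρ` by permuting
the eigenbasis, each unitarily conjugate to `Δ_ρ`. The passive energy, an infimum of linear
functionals over a unitarily invariant family, is concave along such mixtures, so
`E_pass(ρ_cg) ≥ E_pass(Δ_ρ)`.
-/

theorem Matrix.isCompact_unitaryGroup {m 𝕜 : Type*} [Fintype m] [DecidableEq m] [RCLike 𝕜] :
    IsCompact (unitaryGroup m 𝕜 : Set (Matrix m m 𝕜)) := by
  have hbox : IsCompact (Set.univ.pi fun _ : m => Set.univ.pi fun _ : m =>
      Metric.closedBall (0 : 𝕜) 1) :=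
    isCompact_univ_pi fun _ => isCompact_univ_pi fun _ => isCompact_closedBall 0 1
  refine hbox.of_isClosed_subset (isClosed_unitary (R := Matrix m m 𝕜)) fun U hU i _ j _ => ?_
  simpa using entry_norm_bound_of_unitary hU i j

section Epass

variable {d : ℕ}

theorem Epass_le_re_trace_conj (H σ : Matrix (Fin d) (Fin d) ℂ) {U : Matrix (Fin d) (Fin d) ℂ}
    (hU : U ∈ unitaryGroup (Fin d) ℂ) : Epass H σ ≤ ((H * (U * σ * Uᴴ)).trace).re := by
  have hbdd := (isCompact_unitaryGroup.image_of_continuousOn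
    (f := fun U : Matrix (Fin d) (Fin d) ℂ => ((H * (U * σ * Uᴴ)).trace).re)
    (by fun_prop)).bddBelow
  rw [← Subtype.range_coe (s := (unitaryGroup (Fin d) ℂ : Set (Matrix (Fin d) (Fin d) ℂ))),
    ← Set.range_comp] at hbdd
  exact ciInf_le hbdd ⟨U, hU⟩

theorem Epass_le_sum_smul_conj {ι : Type*} [Fintype ι] (H σ : Matrix (Fin d) (Fin d) ℂ)
    {w : ι → ℝ} (hw0 : ∀ i, 0 ≤ w i) (hw1 : ∑ i, w i = 1)
    {V : ι → Matrix (Fin d) (Fin d) ℂ} (hV : ∀ i, V i ∈ unitaryGroup (Fin d) ℂ) :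
    Epass H σ ≤ Epass H (∑ i, (w i : ℂ) • (V i * σ * (V i)ᴴ)) := by
  refine le_ciInf fun U => ?_
  set u := (U : Matrix (Fin d) (Fin d) ℂ)
  have hmix : ((H * (u * (∑ i, (w i : ℂ) • (V i * σ * (V i)ᴴ)) * uᴴ)).trace).re
      = ∑ i, w i * ((H * ((u * V i) * σ * (u * V i)ᴴ)).trace).re := by
    simp only [Matrix.mul_sum, Matrix.sum_mul, Matrix.mul_smul, Matrix.smul_mul, Matrix.trace_sum,
      Matrix.trace_smul, Complex.re_sum, smul_eq_mul, Complex.re_ofReal_mul,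
      Matrix.conjTranspose_mul, Matrix.mul_assoc]
  calc Epass H σ = ∑ i, w i * Epass H σ := by rw [← Finset.sum_mul, hw1, one_mul]
    _ ≤ _ := Finset.sum_le_sum fun i _ =>
        mul_le_mul_of_nonneg_left (Epass_le_re_trace_conj H σ (mul_mem U.2 (hV i))) (hw0 i)
    _ = _ := hmix.symm

end Epass

section Basis

variable {d : ℕ}

def onbMatrix (v : Fin d → Fin d → ℂ) : Matrix (Fin d) (Fin d) ℂ :=
  Matrix.of fun i j => v j i

theorem sum_smul_projVec_eq (v : Fin d → Fin d → ℂ) (f : Fin d → ℂ) :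
    ∑ j, f j • projVec (v j) = onbMatrix v * diagonal f * (onbMatrix v)ᴴ := by
  ext a b
  simp only [projVec, Matrix.sum_apply, Matrix.smul_apply, vecMulVec_apply, Pi.star_apply,
    RCLike.star_def, smul_eq_mul, onbMatrix, Matrix.mul_apply, of_apply, diagonal_apply, mul_ite,
    mul_zero, Finset.sum_ite_eq', Finset.mem_univ, ↓reduceIte, conjTranspose_apply]
  exact Finset.sum_congr rfl fun j _ => by ring

theorem trace_mul_projVec (ρ : Matrix (Fin d) (Fin d) ℂ) (u : Fin d → ℂ) :
    (ρ * projVec u).trace = star u ⬝ᵥ ρ *ᵥ u := by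
  rw [projVec, Matrix.mul_vecMulVec, trace_vecMulVec, dotProduct_comm]

theorem trace_mul_sum_smul_projVec (ρ : Matrix (Fin d) (Fin d) ℂ) (v : Fin d → Fin d → ℂ)
    (f : Fin d → ℂ) :
    (ρ * ∑ j, f j • projVec (v j)).trace = ∑ j, f j * (star (v j) ⬝ᵥ ρ *ᵥ v j) := by
  simp [Matrix.mul_sum, trace_mul_projVec]

namespace IsONB

variable {v : Fin d → Fin d → ℂ} (hv : IsONB v)
include hv

theorem conjTranspose_onbMatrix_mul : (onbMatrix v)ᴴ * onbMatrix v = 1 := by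
  ext i j
  simpa [onbMatrix, Matrix.mul_apply, Matrix.one_apply, dotProduct] using hv i j

theorem onbMatrix_mem_unitaryGroup : onbMatrix v ∈ unitaryGroup (Fin d) ℂ :=
  (mem_unitaryGroup_iff').2 hv.conjTranspose_onbMatrix_mul

theorem dotProduct_sum_smul_projVec_mulVec (f : Fin d → ℂ) (j : Fin d) :
    star (v j) ⬝ᵥ (∑ k, f k • projVec (v k)) *ᵥ v j = f j := by
  simp [projVec, Matrix.sum_mulVec, Matrix.smul_mulVec, vecMulVec_mulVec, dotProduct_sum, hv j]

theorem comp_perm (π : Equiv.Perm (Fin d)) : IsONB (v ∘ π) := fun i j => by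
  simpa using hv (π i) (π j)

theorem exists_unitary_conj {u : Fin d → Fin d → ℂ} (hu : IsONB u) (f : Fin d → ℂ) :
    ∃ V ∈ unitaryGroup (Fin d) ℂ,
      ∑ j, f j • projVec (u j) = V * (∑ j, f j • projVec (v j)) * Vᴴ := by
  refine ⟨onbMatrix u * (onbMatrix v)ᴴ,
    mul_mem hu.onbMatrix_mem_unitaryGroup (Unitary.star_mem hv.onbMatrix_mem_unitaryGroup), ?_⟩
  have hcancel : ∀ X, (onbMatrix v)ᴴ * (onbMatrix v * X) = X := fun X => by
    rw [← Matrix.mul_assoc, hv.conjTranspose_onbMatrix_mul, Matrix.one_mul]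
  simp only [sum_smul_projVec_eq, conjTranspose_mul, conjTranspose_conjTranspose,
    Matrix.mul_assoc, hcancel]

theorem trace_sum_smul_projVec (f : Fin d → ℂ) :
    (∑ j, f j • projVec (v j)).trace = ∑ j, f j := by
  simp [trace_sum, projVec, dotProduct_comm _ (star _), hv _ _]

theorem trace_mul_dephase (ρ : Matrix (Fin d) (Fin d) ℂ) (f : Fin d → ℂ) :
    ((∑ j, f j • projVec (v j)) * dephase ρ v).trace = ((∑ j, f j • projVec (v j)) * ρ).trace := by
  rw [trace_mul_comm, trace_mul_sum_smul_projVec, trace_mul_comm, trace_mul_sum_smul_projVec]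
  simp only [dephase, hv.dotProduct_sum_smul_projVec_mulVec]

theorem exists_mixedUnitary_of_mem_doublyStochastic {B : Matrix (Fin d) (Fin d) ℝ}
    (hB : B ∈ doublyStochastic ℝ (Fin d)) (p : Fin d → ℂ) :
    ∃ (w : Equiv.Perm (Fin d) → ℝ) (V : Equiv.Perm (Fin d) → Matrix (Fin d) (Fin d) ℂ),
      (∀ π, 0 ≤ w π) ∧ ∑ π, w π = 1 ∧ (∀ π, V π ∈ unitaryGroup (Fin d) ℂ) ∧
      ∑ j, (∑ k, (B j k : ℂ) * p k) • projVec (v j)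
        = ∑ π, (w π : ℂ) • (V π * (∑ j, p j • projVec (v j)) * (V π)ᴴ) := by
  obtain ⟨w, hw0, hw1, hwB⟩ := exists_eq_sum_perm_of_mem_doublyStochastic hB
  choose V hV hconj using fun π : Equiv.Perm (Fin d) => hv.exists_unitary_conj (hv.comp_perm π.symm) p
  refine ⟨w, V, hw0, hw1, hV, ?_⟩
  have hBp : ∀ j, ∑ k, (B j k : ℂ) * p k = ∑ π, (w π : ℂ) * p (π j) := fun j => by
    simp only [← hwB, Matrix.sum_apply, Matrix.smul_apply, PEquiv.toMatrix_apply,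
      Equiv.toPEquiv_apply, Option.mem_def, Option.some.injEq, smul_eq_mul, mul_ite, mul_one,
      mul_zero, Complex.ofReal_sum, Finset.sum_mul]
    rw [Finset.sum_comm]
    simp [apply_ite, ite_mul]
  have hperm : ∀ π : Equiv.Perm (Fin d),
      ∑ j, p (π j) • projVec (v j) = ∑ j, p j • projVec ((v ∘ π.symm) j) := fun π => by
    simpa using Equiv.sum_comp π (fun j => p j • projVec (v (π.symm j)))
  simp_rw [← hconj, ← hperm, hBp, Finset.sum_smul, Finset.smul_sum, smul_smul]
  exact Finset.sum_comm

end IsONB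

end Basis

section CoarseGraining

variable {n d : ℕ}

/-- Maps the populations of the dephased state to those of the coarse-grained state. A row of `q`
with zero sum vanishes, so the junk value `x / 0 = 0` does no harm. -/
noncomputable def coarseGrainMatrix (q : Matrix (Fin n) (Fin d) ℝ) : Matrix (Fin d) (Fin d) ℝ :=
  Matrix.of fun j k => ∑ i, q i j * q i k / ∑ l, q i l

theorem ColStochastic.coarseGrainMatrix_mem_doublyStochastic {q : Matrix (Fin n) (Fin d) ℝ}
    (hq : ColStochastic q) : coarseGrainMatrix q ∈ doublyStochastic ℝ (Fin d) := by
  have hcancel : ∀ i j, q i j * (∑ l, q i l) / ∑ l, q i l = q i j := fun i j => by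
    rcases eq_or_ne (∑ l, q i l) 0 with h | h
    · rw [(Finset.sum_eq_zero_iff_of_nonneg fun l _ => hq.1 i l).1 h j (Finset.mem_univ j)]
      simp
    · exact mul_div_cancel_right₀ _ h
  have hrow : ∀ j, ∑ k, coarseGrainMatrix q j k = 1 := fun j => by
    simp only [coarseGrainMatrix, of_apply]
    rw [Finset.sum_comm]
    simp_rw [← Finset.sum_div, ← Finset.mul_sum, hcancel, hq.2]
  have hsymm : ∀ j k, coarseGrainMatrix q j k = coarseGrainMatrix q k j := fun j k => by
    simp only [coarseGrainMatrix, of_apply, mul_comm]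
  refine mem_doublyStochastic_iff_sum.2 ⟨fun j k => ?_, hrow, fun k => ?_⟩
  · simp only [coarseGrainMatrix, of_apply]
    exact Finset.sum_nonneg fun i _ =>
      div_nonneg (mul_nonneg (hq.1 i j) (hq.1 i k)) (Finset.sum_nonneg fun l _ => hq.1 i l)
  · simpa only [hsymm] using hrow k

theorem IsONB.cgState_eq {v : Fin d → Fin d → ℂ} (hv : IsONB v) (ρ : Matrix (Fin d) (Fin d) ℂ)
    {q : Matrix (Fin n) (Fin d) ℝ} {N : Fin n → Matrix (Fin d) (Fin d) ℂ}
    (hN : ∀ i, N i = ∑ j, (q i j : ℂ) • projVec (v j)) :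
    cgState ρ N = ∑ j, (∑ k, (coarseGrainMatrix q j k : ℂ) * (star (v k) ⬝ᵥ ρ *ᵥ v k)) •
      projVec (v j) := by
  simp_rw [cgState, hN, trace_mul_sum_smul_projVec, hv.trace_sum_smul_projVec, Finset.smul_sum,
    smul_smul]
  rw [Finset.sum_comm]
  refine Finset.sum_congr rfl fun j _ => ?_
  rw [← Finset.sum_smul]
  congr 1
  simp only [Finset.sum_div, Finset.sum_mul, coarseGrainMatrix, of_apply, Complex.ofReal_sum,
    Complex.ofReal_div, Complex.ofReal_mul]
  rw [Finset.sum_comm]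
  exact Finset.sum_congr rfl fun k _ => Finset.sum_congr rfl fun i _ => by ring

end CoarseGraining

theorem obsErg_energyIncoherent_le_general {d n : ℕ} (ρ H : Matrix (Fin d) (Fin d) ℂ)
    (E : Fin d → ℝ) (v : Fin d → (Fin d → ℂ)) (hv : IsONB v)
    (hH : H = ∑ j, (E j : ℂ) • projVec (v j))
    (q : Matrix (Fin n) (Fin d) ℝ) (hq : ColStochastic q)
    (N : Fin n → Matrix (Fin d) (Fin d) ℂ)
    (hN : ∀ i, N i = ∑ j, (q i j : ℂ) • projVec (v j)) :
    obsErg ρ H N ≤ Rincoherent ρ H v := by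
  obtain ⟨w, V, hw0, hw1, hV, hmix⟩ := hv.exists_mixedUnitary_of_mem_doublyStochastic
    hq.coarseGrainMatrix_mem_doublyStochastic fun j => star (v j) ⬝ᵥ ρ *ᵥ v j
  have hcg : cgState ρ N = ∑ π, (w π : ℂ) • (V π * dephase ρ v * (V π)ᴴ) :=
    (hv.cgState_eq ρ hN).trans hmix
  rw [obsErg, Rincoherent, hcg, hH, hv.trace_mul_dephase]
  exact sub_le_sub_left (Epass_le_sum_smul_conj _ _ hw0 hw1 hV) _

/-- for any energy-incoherent POVM `N`, the observational ergotropy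
is bounded above by the incoherent ergotropy. -/
theorem obsErg_energyIncoherent_le {d n : ℕ} (ρ H : Matrix (Fin d) (Fin d) ℂ)
    (hρ : ρ.PosSemidef) (hρtr : ρ.trace = 1)
    (E : Fin d → ℝ) (v : Fin d → (Fin d → ℂ)) (hv : IsONB v)
    (hH : H = ∑ j, (E j : ℂ) • projVec (v j))
    (q : Matrix (Fin n) (Fin d) ℝ) (hq : ColStochastic q)
    (N : Fin n → Matrix (Fin d) (Fin d) ℂ)
    (hN : ∀ i, N i = ∑ j, (q i j : ℂ) • projVec (v j))
    (hN0 : ∀ i, N i ≠ 0) :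
    obsErg ρ H N ≤ Rincoherent ρ H v :=
  obsErg_energyIncoherent_le_general ρ H E v hv hH q hq N hN
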